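/- arXiv:0812.0210 — 4 statements merged into one kernel-verified Lean document; each statement's English description precedes it below -/
import Mathlib

section
/- Let d₁ ≥ 1, d₂ ≥ 2, and write Fourier variables (ξ, η') ∈ ℝ^{d₁} × ℝ^{d₂-1}. Set ω(ξ,η') = √(|ξ|² − |η'|²) on the region R₁ = {|η'| < |ξ|} and λ(ξ,η') = √(|η'|² − |ξ|²) on the region R₂ = {|ξ| < |η'|}. Let a, b : ℝ^{d₁} × ℝ^{d₂-1} → ℂ be measurable functions satisfying the constraint λ(ξ,η')·a(ξ,η') + b(ξ,η') = 0 for almost every (ξ,η') ∈ R₂. For y₁ ≥ 0 define A(y₁) = cos(ω y₁)·a + (sin(ω y₁)/ω)·b and B(y₁) = −ω·sin(ω y₁)·a + cos(ω y₁)·b on R₁, and A(y₁) = cosh(λ y₁)·a + (sinh(λ y₁)/λ)·b and B(y₁) = λ·sinh(λ y₁)·a + cosh(λ y₁)·b on R₂. Then for every y₁ ≥ 0, ∬_{R₁} ω²|A(y₁)|² dξdη' + ∬_{R₂} λ²|A(y₁)|² dξdη' + ∬_{R₁∪R₂} |B(y₁)|² dξdη' ≤ ∬_{R₁} ω²|a|²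 dξdη' + ∬_{R₂} λ²|a|² dξdη' + ∬_{R₁∪R₂} |b|² dξdη'. -/
/-!
On the elliptic region `‖η'‖ < ‖ξ‖` the propagator is a rotation in the variables `(ω a, b)`, so
it conserves `ω² |a|² + |b|²` pointwise. On the hyperbolic region `‖ξ‖ < ‖η'‖` the stability
constraint `b = -λ a` selects the decaying mode: there `A(y₁) = e^{-λ y₁} a` and
`B(y₁) = e^{-λ y₁} b`, and both integrands shrink pointwise for `y₁ ≥ 0`.
-/

open MeasureTheory

lemma sqrt_sq_sub_sq_pos {x y : ℝ} (hy : 0 ≤ y) (h : y < x) : 0 < √(x ^ 2 - y ^ 2) :=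
  Real.sqrt_pos.2 (by nlinarith)

lemma oscillatory_energy_eq {w c s : ℝ} (hw : w ≠ 0) (hcs : c ^ 2 + s ^ 2 = 1) (u v : ℂ) :
    w ^ 2 * ‖(c : ℂ) * u + ((s / w : ℝ) : ℂ) * v‖ ^ 2 + ‖-((w * s : ℝ) : ℂ) * u + (c : ℂ) * v‖ ^ 2
      = w ^ 2 * ‖u‖ ^ 2 + ‖v‖ ^ 2 := by
  simp only [Complex.sq_norm, Complex.normSq_apply, Complex.add_re, Complex.add_im,
    Complex.mul_re, Complex.mul_im, Complex.neg_re, Complex.neg_im,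
    Complex.ofReal_re, Complex.ofReal_im]
  field_simp
  linear_combination (w ^ 2 * (u.re ^ 2 + u.im ^ 2) + (v.re ^ 2 + v.im ^ 2)) * hcs

lemma cosh_mul_add_sinh_div_mul_neg (l y : ℝ) (u : ℂ) :
    (Real.cosh (l * y) : ℂ) * u + ((Real.sinh (l * y) / l : ℝ) : ℂ) * -((l : ℂ) * u)
      = (Real.exp (-(l * y)) : ℂ) * u := by
  rcases eq_or_ne l 0 with rfl | hl
  · simp
  have hl' : (l : ℂ) ≠ 0 := by exact_mod_cast hl
  push_cast
  field_simp
  linear_combination u * Complex.cosh_sub_sinh ((l : ℂ) * y)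

lemma mul_sinh_mul_add_cosh_mul_neg (l y : ℝ) (u : ℂ) :
    ((l * Real.sinh (l * y) : ℝ) : ℂ) * u + (Real.cosh (l * y) : ℂ) * -((l : ℂ) * u)
      = (Real.exp (-(l * y)) : ℂ) * -((l : ℂ) * u) := by
  push_cast
  linear_combination (-(l : ℂ) * u) * Complex.cosh_sub_sinh ((l : ℂ) * y)

lemma norm_exp_neg_mul_le {t : ℝ} (ht : 0 ≤ t) (z : ℂ) : ‖(Real.exp (-t) : ℂ) * z‖ ≤ ‖z‖ := by
  rw [norm_mul, Complex.norm_of_nonneg (Real.exp_pos _).le]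
  exact mul_le_of_le_one_left (norm_nonneg z) (Real.exp_le_one_iff.2 (neg_nonpos.2 ht))

section Integrals

variable {α : Type*} [MeasurableSpace α] {μ : Measure α}

lemma lintegral_add_le_of_ae_add_eq {f₁ g₁ f₂ g₂ : α → ENNReal} (hf₂ : AEMeasurable f₂ μ)
    (h : ∀ᵐ p ∂μ, f₁ p + g₁ p = f₂ p + g₂ p) :
    ∫⁻ p, f₁ p ∂μ + ∫⁻ p, g₁ p ∂μ ≤ ∫⁻ p, f₂ p ∂μ + ∫⁻ p, g₂ p ∂μ :=
  calc ∫⁻ p, f₁ p ∂μ + ∫⁻ p, g₁ p ∂μ ≤ ∫⁻ p, f₁ p + g₁ p ∂μ := le_lintegral_add _ _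
    _ = ∫⁻ p, f₂ p + g₂ p ∂μ := lintegral_congr_ae h
    _ = ∫⁻ p, f₂ p ∂μ + ∫⁻ p, g₂ p ∂μ := lintegral_add_left' hf₂ _

lemma lintegral_oscillatory_energy_le {ω : α → ℝ} {a b A B : α → ℂ} {y : ℝ}
    (hω : Measurable ω) (ha : Measurable a) (hω₀ : ∀ᵐ p ∂μ, ω p ≠ 0)
    (hA : ∀ᵐ p ∂μ, A p = (Real.cos (ω p * y) : ℂ) * a p
      + ((Real.sin (ω p * y) / ω p : ℝ) : ℂ) * b p)
    (hB : ∀ᵐ p ∂μ, B p = -((ω p * Real.sin (ω p * y) : ℝ) : ℂ) * a p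
      + (Real.cos (ω p * y) : ℂ) * b p) :
    ∫⁻ p, ENNReal.ofReal (ω p ^ 2 * ‖A p‖ ^ 2) ∂μ + ∫⁻ p, ENNReal.ofReal (‖B p‖ ^ 2) ∂μ
      ≤ ∫⁻ p, ENNReal.ofReal (ω p ^ 2 * ‖a p‖ ^ 2) ∂μ + ∫⁻ p, ENNReal.ofReal (‖b p‖ ^ 2) ∂μ := by
  refine lintegral_add_le_of_ae_add_eq (by fun_prop) ?_
  filter_upwards [hω₀, hA, hB] with p hp hAp hBp
  rw [← ENNReal.ofReal_add (by positivity) (by positivity),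
    ← ENNReal.ofReal_add (by positivity) (by positivity), hAp, hBp,
    oscillatory_energy_eq hp (Real.cos_sq_add_sin_sq _)]

lemma lintegral_evanescent_energy_le {l : α → ℝ} {a b A B : α → ℂ} {y : ℝ} (hy : 0 ≤ y)
    (hl : ∀ᵐ p ∂μ, 0 ≤ l p) (hstable : ∀ᵐ p ∂μ, (l p : ℂ) * a p + b p = 0)
    (hA : ∀ᵐ p ∂μ, A p = (Real.cosh (l p * y) : ℂ) * a p
      + ((Real.sinh (l p * y) / l p : ℝ) : ℂ) * b p)
    (hB : ∀ᵐ p ∂μ, B p = ((l p * Real.sinh (l p * y) : ℝ) : ℂ) * a p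
      + (Real.cosh (l p * y) : ℂ) * b p) :
    ∫⁻ p, ENNReal.ofReal (l p ^ 2 * ‖A p‖ ^ 2) ∂μ ≤ ∫⁻ p, ENNReal.ofReal (l p ^ 2 * ‖a p‖ ^ 2) ∂μ ∧
      ∫⁻ p, ENNReal.ofReal (‖B p‖ ^ 2) ∂μ ≤ ∫⁻ p, ENNReal.ofReal (‖b p‖ ^ 2) ∂μ := by
  have hdecay : ∀ᵐ p ∂μ, ‖A p‖ ≤ ‖a p‖ ∧ ‖B p‖ ≤ ‖b p‖ := by
    filter_upwards [hl, hstable, hA, hB] with p hlp hsp hAp hBp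
    have hb : b p = -((l p : ℂ) * a p) := by linear_combination hsp
    have hly : 0 ≤ l p * y := mul_nonneg hlp hy
    rw [hAp, hBp, hb, cosh_mul_add_sinh_div_mul_neg, mul_sinh_mul_add_cosh_mul_neg]
    exact ⟨norm_exp_neg_mul_le hly _, norm_exp_neg_mul_le hly _⟩
  exact ⟨lintegral_mono_ae (hdecay.mono fun p hp => by gcongr; exact hp.1),
    lintegral_mono_ae (hdecay.mono fun p hp => by gcongr; exact hp.2)⟩

end Integrals

theorem propagator_energy_bound_stable_general
    (d₁ d₂ : ℕ)
    (a b : EuclideanSpace ℝ (Fin d₁) × EuclideanSpace ℝ (Fin (d₂ - 1)) → ℂ)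
    (ha : Measurable a)
    (ω lam : EuclideanSpace ℝ (Fin d₁) × EuclideanSpace ℝ (Fin (d₂ - 1)) → ℝ)
    (hω : ∀ p, ω p = Real.sqrt (‖p.1‖ ^ 2 - ‖p.2‖ ^ 2))
    (hlam : ∀ p, lam p = Real.sqrt (‖p.2‖ ^ 2 - ‖p.1‖ ^ 2))
    (hconstraint : ∀ᵐ p ∂(volume.restrict
        {p : EuclideanSpace ℝ (Fin d₁) × EuclideanSpace ℝ (Fin (d₂ - 1)) | ‖p.1‖ < ‖p.2‖}),
      (lam p : ℂ) * a p + b p = 0)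
    (A B : ℝ → (EuclideanSpace ℝ (Fin d₁) × EuclideanSpace ℝ (Fin (d₂ - 1))) → ℂ)
    (hA₁ : ∀ y₁ p, ‖p.2‖ < ‖p.1‖ →
      A y₁ p = (Real.cos (ω p * y₁) : ℂ) * a p
        + ((Real.sin (ω p * y₁) / ω p : ℝ) : ℂ) * b p)
    (hB₁ : ∀ y₁ p, ‖p.2‖ < ‖p.1‖ →
      B y₁ p = -((ω p * Real.sin (ω p * y₁) : ℝ) : ℂ) * a p
        + ((Real.cos (ω p * y₁) : ℝ) : ℂ) * b p)
    (hA₂ : ∀ y₁ p, ‖p.1‖ < ‖p.2‖ →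
      A y₁ p = (Real.cosh (lam p * y₁) : ℂ) * a p
        + ((Real.sinh (lam p * y₁) / lam p : ℝ) : ℂ) * b p)
    (hB₂ : ∀ y₁ p, ‖p.1‖ < ‖p.2‖ →
      B y₁ p = ((lam p * Real.sinh (lam p * y₁) : ℝ) : ℂ) * a p
        + ((Real.cosh (lam p * y₁) : ℝ) : ℂ) * b p) :
    ∀ y₁ : ℝ, 0 ≤ y₁ →
      (∫⁻ p in {p : EuclideanSpace ℝ (Fin d₁) × EuclideanSpace ℝ (Fin (d₂ - 1)) |
            ‖p.2‖ < ‖p.1‖},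
          ENNReal.ofReal (ω p ^ 2 * ‖A y₁ p‖ ^ 2))
        + (∫⁻ p in {p : EuclideanSpace ℝ (Fin d₁) × EuclideanSpace ℝ (Fin (d₂ - 1)) |
            ‖p.1‖ < ‖p.2‖},
          ENNReal.ofReal (lam p ^ 2 * ‖A y₁ p‖ ^ 2))
        + (∫⁻ p in {p : EuclideanSpace ℝ (Fin d₁) × EuclideanSpace ℝ (Fin (d₂ - 1)) |
            ‖p.2‖ < ‖p.1‖} ∪ {p | ‖p.1‖ < ‖p.2‖},
          ENNReal.ofReal (‖B y₁ p‖ ^ 2))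
      ≤ (∫⁻ p in {p : EuclideanSpace ℝ (Fin d₁) × EuclideanSpace ℝ (Fin (d₂ - 1)) |
            ‖p.2‖ < ‖p.1‖},
          ENNReal.ofReal (ω p ^ 2 * ‖a p‖ ^ 2))
        + (∫⁻ p in {p : EuclideanSpace ℝ (Fin d₁) × EuclideanSpace ℝ (Fin (d₂ - 1)) |
            ‖p.1‖ < ‖p.2‖},
          ENNReal.ofReal (lam p ^ 2 * ‖a p‖ ^ 2))
        + (∫⁻ p in {p : EuclideanSpace ℝ (Fin d₁) × EuclideanSpace ℝ (Fin (d₂ - 1)) |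
            ‖p.2‖ < ‖p.1‖} ∪ {p | ‖p.1‖ < ‖p.2‖},
          ENNReal.ofReal (‖b p‖ ^ 2)) := by
  intro y₁ hy₁
  set S₁ := {p : EuclideanSpace ℝ (Fin d₁) × EuclideanSpace ℝ (Fin (d₂ - 1)) | ‖p.2‖ < ‖p.1‖}
  set S₂ := {p : EuclideanSpace ℝ (Fin d₁) × EuclideanSpace ℝ (Fin (d₂ - 1)) | ‖p.1‖ < ‖p.2‖}
  have hS₁ : MeasurableSet S₁ := measurableSet_lt (by fun_prop) (by fun_prop)
  have hS₂ : MeasurableSet S₂ := measurableSet_lt (by fun_prop) (by fun_prop)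
  have hdisj : Disjoint S₁ S₂ :=
    Set.disjoint_left.2 fun p (h₁ : ‖p.2‖ < ‖p.1‖) (h₂ : ‖p.1‖ < ‖p.2‖) => lt_asymm h₁ h₂
  have hωm : Measurable ω := by rw [funext hω]; fun_prop
  have helliptic := lintegral_oscillatory_energy_le (μ := volume.restrict S₁) (y := y₁) hωm ha
    (ae_restrict_of_forall_mem hS₁ fun p hp => by
      rw [hω]; exact (sqrt_sq_sub_sq_pos (norm_nonneg _) hp).ne')
    (ae_restrict_of_forall_mem hS₁ (hA₁ y₁)) (ae_restrict_of_forall_mem hS₁ (hB₁ y₁))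
  obtain ⟨hhypA, hhypB⟩ := lintegral_evanescent_energy_le hy₁
    (ae_of_all _ fun p => (hlam p).symm ▸ Real.sqrt_nonneg _) hconstraint
    (ae_restrict_of_forall_mem hS₂ (hA₂ y₁)) (ae_restrict_of_forall_mem hS₂ (hB₂ y₁))
  rw [lintegral_union hS₂ hdisj, lintegral_union hS₂ hdisj]
  calc _ = (_ + _) + (_ + _) := by ring
    _ ≤ (_ + _) + (_ + _) := add_le_add helliptic (add_le_add hhypA hhypB)
    _ = _ := by ring

/-- Theorems 2 and 3 of the paper: the propagator of the mixed-signature Cauchy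
problem for the ultrahyperbolic equation, applied to Fourier data `(a, b)` in the
center stable subspace `X^S` (i.e. satisfying `λ·a + b = 0` a.e. on `R₂`), does not
increase the energy (X-)norm for `y₁ ≥ 0`. -/
theorem propagator_energy_bound_stable
    (d₁ d₂ : ℕ) (hd₁ : 1 ≤ d₁) (hd₂ : 2 ≤ d₂)
    (a b : EuclideanSpace ℝ (Fin d₁) × EuclideanSpace ℝ (Fin (d₂ - 1)) → ℂ)
    (ha : Measurable a) (hb : Measurable b)
    (ω lam : EuclideanSpace ℝ (Fin d₁) × EuclideanSpace ℝ (Fin (d₂ - 1)) → ℝ)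
    (hω : ∀ p, ω p = Real.sqrt (‖p.1‖ ^ 2 - ‖p.2‖ ^ 2))
    (hlam : ∀ p, lam p = Real.sqrt (‖p.2‖ ^ 2 - ‖p.1‖ ^ 2))
    (hconstraint : ∀ᵐ p ∂(volume.restrict
        {p : EuclideanSpace ℝ (Fin d₁) × EuclideanSpace ℝ (Fin (d₂ - 1)) | ‖p.1‖ < ‖p.2‖}),
      (lam p : ℂ) * a p + b p = 0)
    (A B : ℝ → (EuclideanSpace ℝ (Fin d₁) × EuclideanSpace ℝ (Fin (d₂ - 1))) → ℂ)
    (hA₁ : ∀ y₁ p, ‖p.2‖ < ‖p.1‖ →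
      A y₁ p = (Real.cos (ω p * y₁) : ℂ) * a p
        + ((Real.sin (ω p * y₁) / ω p : ℝ) : ℂ) * b p)
    (hB₁ : ∀ y₁ p, ‖p.2‖ < ‖p.1‖ →
      B y₁ p = -((ω p * Real.sin (ω p * y₁) : ℝ) : ℂ) * a p
        + ((Real.cos (ω p * y₁) : ℝ) : ℂ) * b p)
    (hA₂ : ∀ y₁ p, ‖p.1‖ < ‖p.2‖ →
      A y₁ p = (Real.cosh (lam p * y₁) : ℂ) * a p
        + ((Real.sinh (lam p * y₁) / lam p : ℝ) : ℂ) * b p)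
    (hB₂ : ∀ y₁ p, ‖p.1‖ < ‖p.2‖ →
      B y₁ p = ((lam p * Real.sinh (lam p * y₁) : ℝ) : ℂ) * a p
        + ((Real.cosh (lam p * y₁) : ℝ) : ℂ) * b p) :
    ∀ y₁ : ℝ, 0 ≤ y₁ →
      (∫⁻ p in {p : EuclideanSpace ℝ (Fin d₁) × EuclideanSpace ℝ (Fin (d₂ - 1)) |
            ‖p.2‖ < ‖p.1‖},
          ENNReal.ofReal (ω p ^ 2 * ‖A y₁ p‖ ^ 2))
        + (∫⁻ p in {p : EuclideanSpace ℝ (Fin d₁) × EuclideanSpace ℝ (Fin (d₂ - 1)) |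
            ‖p.1‖ < ‖p.2‖},
          ENNReal.ofReal (lam p ^ 2 * ‖A y₁ p‖ ^ 2))
        + (∫⁻ p in {p : EuclideanSpace ℝ (Fin d₁) × EuclideanSpace ℝ (Fin (d₂ - 1)) |
            ‖p.2‖ < ‖p.1‖} ∪ {p | ‖p.1‖ < ‖p.2‖},
          ENNReal.ofReal (‖B y₁ p‖ ^ 2))
      ≤ (∫⁻ p in {p : EuclideanSpace ℝ (Fin d₁) × EuclideanSpace ℝ (Fin (d₂ - 1)) |
            ‖p.2‖ < ‖p.1‖},
          ENNReal.ofReal (ω p ^ 2 * ‖a p‖ ^ 2))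
        + (∫⁻ p in {p : EuclideanSpace ℝ (Fin d₁) × EuclideanSpace ℝ (Fin (d₂ - 1)) |
            ‖p.1‖ < ‖p.2‖},
          ENNReal.ofReal (lam p ^ 2 * ‖a p‖ ^ 2))
        + (∫⁻ p in {p : EuclideanSpace ℝ (Fin d₁) × EuclideanSpace ℝ (Fin (d₂ - 1)) |
            ‖p.2‖ < ‖p.1‖} ∪ {p | ‖p.1‖ < ‖p.2‖},
          ENNReal.ofReal (‖b p‖ ^ 2)) :=
  propagator_energy_bound_stable_general d₁ d₂ a b ha ω lam hω hlam hconstraint A B hA₁ hB₁ hA₂ hB₂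
end

section
/- Let d₁ ≥ 1, d₂ ≥ 2, m ∈ ℕ, and write Fourier variables (ξ, η') ∈ ℝ^{d₁} × ℝ^{d₂-1}. Set ω(ξ,η') = √(|ξ|² − |η'|²) on R₁ = {|η'| < |ξ|} and λ(ξ,η') = √(|η'|² − |ξ|²) on R₂ = {|ξ| < |η'|}, and let W_m(ξ,η') = (1 + |ξ|² + |η'|²)^m. Let a, b : ℝ^{d₁} × ℝ^{d₂-1} → ℂ be measurable with λ·a + b = 0 almost everywhere on R₂. For y₁ ≥ 0 define A(y₁) = cos(ω y₁)·a + (sin(ω y₁)/ω)·b, B(y₁) = −ω·sin(ω y₁)·a + cos(ω y₁)·b on R₁, and A(y₁) = cosh(λ y₁)·a + (sinh(λ y₁)/λ)·b, B(y₁) = λ·sinh(λ y₁)·a + cosh(λ y₁)·b on R₂. Then for every y₁ ≥ 0, ∬_{R₁} W_m·ω²|A(y₁)|² + ∬_{R₂} W_m·λ²|A(y₁)|² + ∬_{R₁∪R₂} W_m·|B(y₁)|² ≤ ∬_{R₁} W_m·ω²|a|² + ∬_{R₂} W_m·λ²|a|² + ∬_{R₁∪R₂} W_m·|b|². -/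
/-!
At each frequency the pair `(ω A, B)` arises from `(ω a, b)` by the rotation through the angle
`ω y₁`, so on `|η'| < |ξ|` the energy density `ω² |A|² + |B|²` is conserved. On `|ξ| < |η'|` the
constraint `λ a + b = 0` kills the growing mode `e^{λ y₁}`, leaving `(λ A, B) = e^{-λ y₁} (λ a, b)`,
whose energy density decays for `y₁ ≥ 0`. Multiplying by the weight `W_m ≥ 0` and integrating
over both regions gives the bound.
-/

open MeasureTheory

theorem norm_sq_add_norm_sq_rotation {E : Type*} [NormedAddCommGroup E] [InnerProductSpace ℝ E]
    {c s : ℝ} (h : s ^ 2 + c ^ 2 = 1) (x u : E) :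
    ‖c • x + s • u‖ ^ 2 + ‖-s • x + c • u‖ ^ 2 = ‖x‖ ^ 2 + ‖u‖ ^ 2 := by
  simp only [norm_add_sq_real, norm_smul, inner_smul_left, inner_smul_right, mul_pow,
    Real.norm_eq_abs, sq_abs, RCLike.conj_to_real]
  linear_combination (‖x‖ ^ 2 + ‖u‖ ^ 2) * h

theorem norm_sq_add_norm_sq_cosh_sinh_le {E : Type*} [NormedAddCommGroup E]
    [NormedSpace ℝ E] {t : ℝ} (ht : 0 ≤ t) {x u : E} (hxu : x + u = 0) :
    ‖Real.cosh t • x + Real.sinh t • u‖ ^ 2 + ‖Real.sinh t • x + Real.cosh t • u‖ ^ 2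
      ≤ ‖x‖ ^ 2 + ‖u‖ ^ 2 := by
  obtain rfl : u = -x := eq_neg_of_add_eq_zero_right hxu
  have hdecay : Real.exp (-t) ^ 2 ≤ 1 := pow_le_one₀ (Real.exp_nonneg _) (by simpa using ht)
  rw [smul_neg, smul_neg, ← sub_eq_add_neg, ← sub_eq_add_neg, ← sub_smul, ← sub_smul,
    Real.cosh_sub_sinh, ← neg_sub, Real.cosh_sub_sinh, neg_smul]
  simp only [norm_neg, norm_smul, mul_pow, Real.norm_eq_abs, sq_abs]
  nlinarith [sq_nonneg ‖x‖]

theorem sq_mul_norm_sq_eq_norm_ofReal_mul_sq (w : ℝ) (z : ℂ) :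
    w ^ 2 * ‖z‖ ^ 2 = ‖(w : ℂ) * z‖ ^ 2 := by
  rw [norm_mul, Complex.norm_real, Real.norm_eq_abs, mul_pow, sq_abs]

theorem ofReal_mul_add_ofReal_div_mul {w s : ℝ} (hs : w = 0 → s = 0) (z u : ℂ) :
    (w : ℂ) * (z + ((s / w : ℝ) : ℂ) * u) = w * z + s * u := by
  rw [mul_add, ← mul_assoc, ← Complex.ofReal_mul, mul_div_cancel_of_imp' hs]

theorem oscillatory_energy_eq_s5 (w y : ℝ) (z u : ℂ) :
    w ^ 2 * ‖(Real.cos (w * y) : ℂ) * z + ((Real.sin (w * y) / w : ℝ) : ℂ) * u‖ ^ 2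
      + ‖-((w * Real.sin (w * y) : ℝ) : ℂ) * z + ((Real.cos (w * y) : ℝ) : ℂ) * u‖ ^ 2
    = w ^ 2 * ‖z‖ ^ 2 + ‖u‖ ^ 2 := by
  have key := norm_sq_add_norm_sq_rotation (Real.sin_sq_add_cos_sq (w * y)) ((w : ℂ) * z) u
  rw [sq_mul_norm_sq_eq_norm_ofReal_mul_sq, sq_mul_norm_sq_eq_norm_ofReal_mul_sq,
    ofReal_mul_add_ofReal_div_mul fun h ↦ by simp [h]]
  simp only [Complex.real_smul, Complex.ofReal_neg, Complex.ofReal_mul] at key ⊢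
  convert key using 3 <;> congr 1 <;> ring

theorem evanescent_energy_le {l y : ℝ} (hl : 0 ≤ l) (hy : 0 ≤ y) {z u : ℂ}
    (hzu : (l : ℂ) * z + u = 0) :
    l ^ 2 * ‖(Real.cosh (l * y) : ℂ) * z + ((Real.sinh (l * y) / l : ℝ) : ℂ) * u‖ ^ 2
      + ‖((l * Real.sinh (l * y) : ℝ) : ℂ) * z + ((Real.cosh (l * y) : ℝ) : ℂ) * u‖ ^ 2
    ≤ l ^ 2 * ‖z‖ ^ 2 + ‖u‖ ^ 2 := by
  have key := norm_sq_add_norm_sq_cosh_sinh_le (mul_nonneg hl hy) hzu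
  rw [sq_mul_norm_sq_eq_norm_ofReal_mul_sq, sq_mul_norm_sq_eq_norm_ofReal_mul_sq,
    ofReal_mul_add_ofReal_div_mul fun h ↦ by simp [h]]
  simp only [Complex.real_smul, Complex.ofReal_mul] at key ⊢
  convert key using 3 <;> congr 1 <;> ring

theorem lintegral_add_le_lintegral_add_of_ae_le {α : Type*} [MeasurableSpace α] {μ : Measure α}
    {f g f' g' : α → ENNReal} (hg' : AEMeasurable g' μ) (h : ∀ᵐ x ∂μ, f x + g x ≤ f' x + g' x) :
    ∫⁻ x, f x ∂μ + ∫⁻ x, g x ∂μ ≤ ∫⁻ x, f' x ∂μ + ∫⁻ x, g' x ∂μ :=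
  calc ∫⁻ x, f x ∂μ + ∫⁻ x, g x ∂μ ≤ ∫⁻ x, f x + g x ∂μ := le_lintegral_add f g
    _ ≤ ∫⁻ x, f' x + g' x ∂μ := lintegral_mono_ae h
    _ = ∫⁻ x, f' x ∂μ + ∫⁻ x, g' x ∂μ := lintegral_add_right' f' hg'

theorem lintegral_ofReal_weighted_add_le {α : Type*} [MeasurableSpace α] {μ : Measure α}
    {W e₁ e₂ f₁ f₂ : α → ℝ} (hW : ∀ x, 0 ≤ W x) (he₁ : ∀ x, 0 ≤ e₁ x) (he₂ : ∀ x, 0 ≤ e₂ x)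
    (hf₂ : AEMeasurable (fun x ↦ ENNReal.ofReal (W x * f₂ x)) μ)
    (h : ∀ᵐ x ∂μ, e₁ x + e₂ x ≤ f₁ x + f₂ x) :
    ∫⁻ x, ENNReal.ofReal (W x * e₁ x) ∂μ + ∫⁻ x, ENNReal.ofReal (W x * e₂ x) ∂μ
      ≤ ∫⁻ x, ENNReal.ofReal (W x * f₁ x) ∂μ + ∫⁻ x, ENNReal.ofReal (W x * f₂ x) ∂μ := by
  refine lintegral_add_le_lintegral_add_of_ae_le hf₂ (h.mono fun x hx ↦ ?_)
  calc ENNReal.ofReal (W x * e₁ x) + ENNReal.ofReal (W x * e₂ x)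
      = ENNReal.ofReal (W x * (e₁ x + e₂ x)) := by
        rw [mul_add, ENNReal.ofReal_add (mul_nonneg (hW x) (he₁ x)) (mul_nonneg (hW x) (he₂ x))]
    _ ≤ ENNReal.ofReal (W x * (f₁ x + f₂ x)) :=
        ENNReal.ofReal_le_ofReal (mul_le_mul_of_nonneg_left hx (hW x))
    _ ≤ ENNReal.ofReal (W x * f₁ x) + ENNReal.ofReal (W x * f₂ x) := by
        rw [mul_add]; exact ENNReal.ofReal_add_le

theorem propagator_higher_energy_bound_stable_general
    (d₁ d₂ : ℕ) (m : ℕ)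
    (a b : EuclideanSpace ℝ (Fin d₁) × EuclideanSpace ℝ (Fin (d₂ - 1)) → ℂ)
    (hb : Measurable b)
    (ω lam W : EuclideanSpace ℝ (Fin d₁) × EuclideanSpace ℝ (Fin (d₂ - 1)) → ℝ)
    (hlam : ∀ p, lam p = Real.sqrt (‖p.2‖ ^ 2 - ‖p.1‖ ^ 2))
    (hW : ∀ p, W p = (1 + ‖p.1‖ ^ 2 + ‖p.2‖ ^ 2) ^ m)
    (hconstraint : ∀ᵐ p ∂(volume.restrict
        {p : EuclideanSpace ℝ (Fin d₁) × EuclideanSpace ℝ (Fin (d₂ - 1)) | ‖p.1‖ < ‖p.2‖}),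
      (lam p : ℂ) * a p + b p = 0)
    (A B : ℝ → (EuclideanSpace ℝ (Fin d₁) × EuclideanSpace ℝ (Fin (d₂ - 1))) → ℂ)
    (hA₁ : ∀ y₁ p, ‖p.2‖ < ‖p.1‖ →
      A y₁ p = (Real.cos (ω p * y₁) : ℂ) * a p
        + ((Real.sin (ω p * y₁) / ω p : ℝ) : ℂ) * b p)
    (hB₁ : ∀ y₁ p, ‖p.2‖ < ‖p.1‖ →
      B y₁ p = -((ω p * Real.sin (ω p * y₁) : ℝ) : ℂ) * a p
        + ((Real.cos (ω p * y₁) : ℝ) : ℂ) * b p)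
    (hA₂ : ∀ y₁ p, ‖p.1‖ < ‖p.2‖ →
      A y₁ p = (Real.cosh (lam p * y₁) : ℂ) * a p
        + ((Real.sinh (lam p * y₁) / lam p : ℝ) : ℂ) * b p)
    (hB₂ : ∀ y₁ p, ‖p.1‖ < ‖p.2‖ →
      B y₁ p = ((lam p * Real.sinh (lam p * y₁) : ℝ) : ℂ) * a p
        + ((Real.cosh (lam p * y₁) : ℝ) : ℂ) * b p) :
    ∀ y₁ : ℝ, 0 ≤ y₁ →
      (∫⁻ p in {p : EuclideanSpace ℝ (Fin d₁) × EuclideanSpace ℝ (Fin (d₂ - 1)) |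
            ‖p.2‖ < ‖p.1‖},
          ENNReal.ofReal (W p * (ω p ^ 2 * ‖A y₁ p‖ ^ 2)))
        + (∫⁻ p in {p : EuclideanSpace ℝ (Fin d₁) × EuclideanSpace ℝ (Fin (d₂ - 1)) |
            ‖p.1‖ < ‖p.2‖},
          ENNReal.ofReal (W p * (lam p ^ 2 * ‖A y₁ p‖ ^ 2)))
        + (∫⁻ p in {p : EuclideanSpace ℝ (Fin d₁) × EuclideanSpace ℝ (Fin (d₂ - 1)) |
            ‖p.2‖ < ‖p.1‖} ∪ {p | ‖p.1‖ < ‖p.2‖},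
          ENNReal.ofReal (W p * ‖B y₁ p‖ ^ 2))
      ≤ (∫⁻ p in {p : EuclideanSpace ℝ (Fin d₁) × EuclideanSpace ℝ (Fin (d₂ - 1)) |
            ‖p.2‖ < ‖p.1‖},
          ENNReal.ofReal (W p * (ω p ^ 2 * ‖a p‖ ^ 2)))
        + (∫⁻ p in {p : EuclideanSpace ℝ (Fin d₁) × EuclideanSpace ℝ (Fin (d₂ - 1)) |
            ‖p.1‖ < ‖p.2‖},
          ENNReal.ofReal (W p * (lam p ^ 2 * ‖a p‖ ^ 2)))
        + (∫⁻ p in {p : EuclideanSpace ℝ (Fin d₁) × EuclideanSpace ℝ (Fin (d₂ - 1)) |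
            ‖p.2‖ < ‖p.1‖} ∪ {p | ‖p.1‖ < ‖p.2‖},
          ENNReal.ofReal (W p * ‖b p‖ ^ 2)) := by
  intro y₁ hy₁
  have hS₁ : MeasurableSet {p : EuclideanSpace ℝ (Fin d₁) × EuclideanSpace ℝ (Fin (d₂ - 1)) |
      ‖p.2‖ < ‖p.1‖} := measurableSet_lt (by fun_prop) (by fun_prop)
  have hS₂ : MeasurableSet {p : EuclideanSpace ℝ (Fin d₁) × EuclideanSpace ℝ (Fin (d₂ - 1)) |
      ‖p.1‖ < ‖p.2‖} := measurableSet_lt (by fun_prop) (by fun_prop)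
  have hdisj : Disjoint {p : EuclideanSpace ℝ (Fin d₁) × EuclideanSpace ℝ (Fin (d₂ - 1)) |
      ‖p.2‖ < ‖p.1‖} {p | ‖p.1‖ < ‖p.2‖} :=
    Set.disjoint_left.2 fun p (h : ‖p.2‖ < ‖p.1‖) ↦ lt_asymm h
  have hW₀ : ∀ p, 0 ≤ W p := fun p ↦ by rw [hW]; positivity
  have hWb : Measurable fun p ↦ ENNReal.ofReal (W p * ‖b p‖ ^ 2) := by
    rw [show W = _ from funext hW]; fun_prop
  rw [lintegral_union hS₂ hdisj, lintegral_union hS₂ hdisj]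
  refine (add_add_add_comm _ _ _ _).trans_le
    ((add_le_add ?_ ?_).trans_eq (add_add_add_comm _ _ _ _))
  · refine lintegral_ofReal_weighted_add_le hW₀ (fun _ ↦ by positivity) (fun _ ↦ by positivity)
      hWb.aemeasurable ?_
    filter_upwards [ae_restrict_mem hS₁] with p hp
    rw [hA₁ y₁ p hp, hB₁ y₁ p hp, oscillatory_energy_eq_s5]
  · refine lintegral_ofReal_weighted_add_le hW₀ (fun _ ↦ by positivity) (fun _ ↦ by positivity)
      hWb.aemeasurable ?_
    filter_upwards [hconstraint, ae_restrict_mem hS₂] with p hc hp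
    rw [hA₂ y₁ p hp, hB₂ y₁ p hp]
    exact evanescent_energy_le (hlam p ▸ Real.sqrt_nonneg _) hy₁ hc

/-- Higher-energy-space version (Corollary to Theorems 2 and 3 of the paper) of the
propagator estimate: with the polynomial weight `W_m = (1+|ξ|²+|η'|²)^m`, the
weighted energy norm does not increase for `y₁ ≥ 0` on the subspace `X^{m,S}`. -/
theorem propagator_higher_energy_bound_stable
    (d₁ d₂ : ℕ) (hd₁ : 1 ≤ d₁) (hd₂ : 2 ≤ d₂) (m : ℕ)
    (a b : EuclideanSpace ℝ (Fin d₁) × EuclideanSpace ℝ (Fin (d₂ - 1)) → ℂ)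
    (ha : Measurable a) (hb : Measurable b)
    (ω lam W : EuclideanSpace ℝ (Fin d₁) × EuclideanSpace ℝ (Fin (d₂ - 1)) → ℝ)
    (hω : ∀ p, ω p = Real.sqrt (‖p.1‖ ^ 2 - ‖p.2‖ ^ 2))
    (hlam : ∀ p, lam p = Real.sqrt (‖p.2‖ ^ 2 - ‖p.1‖ ^ 2))
    (hW : ∀ p, W p = (1 + ‖p.1‖ ^ 2 + ‖p.2‖ ^ 2) ^ m)
    (hconstraint : ∀ᵐ p ∂(volume.restrict
        {p : EuclideanSpace ℝ (Fin d₁) × EuclideanSpace ℝ (Fin (d₂ - 1)) | ‖p.1‖ < ‖p.2‖}),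
      (lam p : ℂ) * a p + b p = 0)
    (A B : ℝ → (EuclideanSpace ℝ (Fin d₁) × EuclideanSpace ℝ (Fin (d₂ - 1))) → ℂ)
    (hA₁ : ∀ y₁ p, ‖p.2‖ < ‖p.1‖ →
      A y₁ p = (Real.cos (ω p * y₁) : ℂ) * a p
        + ((Real.sin (ω p * y₁) / ω p : ℝ) : ℂ) * b p)
    (hB₁ : ∀ y₁ p, ‖p.2‖ < ‖p.1‖ →
      B y₁ p = -((ω p * Real.sin (ω p * y₁) : ℝ) : ℂ) * a p
        + ((Real.cos (ω p * y₁) : ℝ) : ℂ) * b p)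
    (hA₂ : ∀ y₁ p, ‖p.1‖ < ‖p.2‖ →
      A y₁ p = (Real.cosh (lam p * y₁) : ℂ) * a p
        + ((Real.sinh (lam p * y₁) / lam p : ℝ) : ℂ) * b p)
    (hB₂ : ∀ y₁ p, ‖p.1‖ < ‖p.2‖ →
      B y₁ p = ((lam p * Real.sinh (lam p * y₁) : ℝ) : ℂ) * a p
        + ((Real.cosh (lam p * y₁) : ℝ) : ℂ) * b p) :
    ∀ y₁ : ℝ, 0 ≤ y₁ →
      (∫⁻ p in {p : EuclideanSpace ℝ (Fin d₁) × EuclideanSpace ℝ (Fin (d₂ - 1)) |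
            ‖p.2‖ < ‖p.1‖},
          ENNReal.ofReal (W p * (ω p ^ 2 * ‖A y₁ p‖ ^ 2)))
        + (∫⁻ p in {p : EuclideanSpace ℝ (Fin d₁) × EuclideanSpace ℝ (Fin (d₂ - 1)) |
            ‖p.1‖ < ‖p.2‖},
          ENNReal.ofReal (W p * (lam p ^ 2 * ‖A y₁ p‖ ^ 2)))
        + (∫⁻ p in {p : EuclideanSpace ℝ (Fin d₁) × EuclideanSpace ℝ (Fin (d₂ - 1)) |
            ‖p.2‖ < ‖p.1‖} ∪ {p | ‖p.1‖ < ‖p.2‖},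
          ENNReal.ofReal (W p * ‖B y₁ p‖ ^ 2))
      ≤ (∫⁻ p in {p : EuclideanSpace ℝ (Fin d₁) × EuclideanSpace ℝ (Fin (d₂ - 1)) |
            ‖p.2‖ < ‖p.1‖},
          ENNReal.ofReal (W p * (ω p ^ 2 * ‖a p‖ ^ 2)))
        + (∫⁻ p in {p : EuclideanSpace ℝ (Fin d₁) × EuclideanSpace ℝ (Fin (d₂ - 1)) |
            ‖p.1‖ < ‖p.2‖},
          ENNReal.ofReal (W p * (lam p ^ 2 * ‖a p‖ ^ 2)))
        + (∫⁻ p in {p : EuclideanSpace ℝ (Fin d₁) × EuclideanSpace ℝ (Fin (d₂ - 1)) |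
            ‖p.2‖ < ‖p.1‖} ∪ {p | ‖p.1‖ < ‖p.2‖},
          ENNReal.ofReal (W p * ‖b p‖ ^ 2)) :=
  propagator_higher_energy_bound_stable_general d₁ d₂ m a b hb ω lam W hlam hW hconstraint A B hA₁
    hB₁ hA₂ hB₂
end

section
/- Let ψ : ℝ → ℝ be a smooth, even, nonnegative function with support contained in [−1, 1] satisfying (1/√(2π)) ∫_{−1}^{1} ψ(θ) dθ = 1. For a Schwartz function w : ℝ → ℂ with Fourier transform ŵ, define E(w)(x, y) = (1/(2π)) ∬ e^{i(ξx + ηy)} ŵ(ξ) ψ(η/|ξ|) |ξ|^{−1} dη dξ. Then for every x ∈ ℝ: (i) E(w)(x, 0) = w(x), and (ii) ∂_y E(w)(x, 0) = 0. Consequently, given Schwartz data (w₀, w₁₀, w₀₁) on M, the pair u₀ := E(w₀) + y·E(w₀₁), u₁ := E(w₁₀) satisfies u₀(x,0) = w₀(x), u₁(x,0) = w₁₀(x), and ∂_y u₀(x,0) = w₀₁(x). -/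
open MeasureTheory

open Complex FourierTransform Real SchwartzMap Filter Metric

set_option maxHeartbeats 1000000 in
lemma ext_key
    (ψ : ℝ → ℝ) (hψs : ContDiff ℝ (⊤ : ℕ∞) ψ) (hψsupp : Function.support ψ ⊆ Set.Icc (-1) 1)
    (hψeven : ∀ θ, ψ (-θ) = ψ θ) (hψnonneg : ∀ θ, 0 ≤ ψ θ)
    (hψnorm : (1 / Real.sqrt (2 * Real.pi)) * ∫ θ in Set.Icc (-1 : ℝ) 1, ψ θ = 1)
    (FT : SchwartzMap ℝ ℂ → ℝ → ℂ)
    (hFT : ∀ (w : SchwartzMap ℝ ℂ) (ξ : ℝ),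
      FT w ξ = ((1 / Real.sqrt (2 * Real.pi) : ℝ) : ℂ)
        * ∫ x : ℝ, Complex.exp (-(Complex.I * ξ * x)) * w x)
    (w : SchwartzMap ℝ ℂ) (x : ℝ) :
    (((1 / (2 * Real.pi) : ℝ) : ℂ) * ∫ p : ℝ × ℝ,
        Complex.exp (Complex.I * (p.1 * x + p.2 * (0:ℝ))) * FT w p.1
          * ((ψ (p.2 / |p.1|) : ℝ) : ℂ) * ((|p.1|⁻¹ : ℝ) : ℂ)) = w x
    ∧ HasDerivAt (fun y : ℝ => ((1 / (2 * Real.pi) : ℝ) : ℂ) * ∫ p : ℝ × ℝ,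
        Complex.exp (Complex.I * (p.1 * x + p.2 * y)) * FT w p.1
          * ((ψ (p.2 / |p.1|) : ℝ) : ℂ) * ((|p.1|⁻¹ : ℝ) : ℂ)) 0 0 := by
  have hπ : (0:ℝ) < 2 * Real.pi := by positivity
  have hπ' : (2:ℝ) * Real.pi ≠ 0 := ne_of_gt hπ
  set s : ℝ := Real.sqrt (2 * Real.pi) with hs_def
  have hs : 0 < s := Real.sqrt_pos.mpr hπ
  have hs0 : s ≠ 0 := ne_of_gt hs
  -- ψ basics
  have hψc : Continuous ψ := hψs.continuous
  have hcs : HasCompactSupport ψ := by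
    refine HasCompactSupport.intro (isCompact_Icc (a := (-1:ℝ)) (b := 1)) fun t ht => ?_
    by_contra h
    exact ht (hψsupp (Function.mem_support.mpr h))
  have hψint : Integrable ψ := hψc.integrable_of_hasCompactSupport hcs
  have hψ1c : Continuous (fun t => |t| * ψ t) := continuous_abs.mul hψc
  have hψ1cs : HasCompactSupport (fun t => |t| * ψ t) := hcs.mul_left
  have hψ1int : Integrable (fun t => |t| * ψ t) :=
    hψ1c.integrable_of_hasCompactSupport hψ1cs
  have htψint : Integrable (fun t => t * ψ t) := by
    have : Continuous (fun t : ℝ => t * ψ t) := continuous_id.mul hψc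
    refine this.integrable_of_hasCompactSupport ?_
    exact hcs.mul_left
  -- total integral of ψ
  have hS : ∫ θ : ℝ, ψ θ = s := by
    have h0 : ∫ θ in Set.Icc (-1:ℝ) 1, ψ θ = ∫ θ, ψ θ := by
      apply setIntegral_eq_integral_of_forall_compl_eq_zero
      intro t ht
      by_contra h
      exact ht (hψsupp (Function.mem_support.mpr h))
    rw [h0] at hψnorm
    field_simp at hψnorm
    linarith [hψnorm]
  -- odd integral
  have hOdd : ∫ θ : ℝ, θ * ψ θ = 0 := by
    have h1 : ∫ θ : ℝ, (-θ) * ψ (-θ) = ∫ θ : ℝ, θ * ψ θ :=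
      integral_neg_eq_self (fun θ => θ * ψ θ) volume
    have h2 : ∫ θ : ℝ, (-θ) * ψ (-θ) = - ∫ θ : ℝ, θ * ψ θ := by
      rw [← integral_neg]
      refine integral_congr_ae (Eventually.of_forall fun θ => ?_)
      show -θ * ψ (-θ) = -(θ * ψ θ)
      rw [hψeven]; ring
    linarith [h1.symm.trans h2]
  -- Fourier transform facts
  set W : SchwartzMap ℝ ℂ := fourierTransformCLM ℂ w with hW_def
  have hWf : ∀ v : ℝ, W v = 𝓕 (⇑w) v := fun v => by
    rw [hW_def, fourierTransformCLM_apply, SchwartzMap.fourier_coe]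
  have hFTW : ∀ ξ : ℝ, FT w ξ = ((s⁻¹ : ℝ) : ℂ) * W (ξ / (2 * Real.pi)) := by
    intro ξ
    rw [hFT]
    congr 1
    · push_cast; rw [one_div]
    rw [hWf, Real.fourier_real_eq_integral_exp_smul]
    refine integral_congr_ae (Eventually.of_forall fun v => ?_)
    have h1 : -2 * Real.pi * v * (ξ / (2 * Real.pi)) = -(v * ξ) := by field_simp
    simp only [h1, smul_eq_mul]
    congr 1
    push_cast
    ring
  have hFTcont : Continuous (FT w) := by
    have : (FT w) = fun ξ => ((s⁻¹ : ℝ) : ℂ) * W (ξ / (2 * Real.pi)) := funext hFTW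
    rw [this]
    exact continuous_const.mul (W.continuous.comp (continuous_id.div_const _))
  have hFTint : Integrable (FT w) := by
    have : (FT w) = fun ξ => ((s⁻¹ : ℝ) : ℂ) * W (ξ / (2 * Real.pi)) := funext hFTW
    rw [this]
    exact (W.integrable.comp_div hπ').const_mul _
  have hFT1int : Integrable (fun ξ => |ξ| * ‖FT w ξ‖) := by
    have h1 : Integrable (fun v => ‖v‖ ^ 1 * ‖W v‖) := W.integrable_pow_mul volume 1
    have h2 : Integrable (fun ξ : ℝ => ‖ξ / (2*Real.pi)‖ ^ 1 * ‖W (ξ / (2*Real.pi))‖) :=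
      h1.comp_div hπ'
    refine (h2.const_mul (2 * Real.pi * s⁻¹)).congr
      (Eventually.of_forall fun ξ => ?_)
    show 2 * Real.pi * s⁻¹ * (‖ξ / (2*Real.pi)‖ ^ 1 * ‖W (ξ / (2*Real.pi))‖) = |ξ| * ‖FT w ξ‖
    rw [hFTW]
    simp only [pow_one, Real.norm_eq_abs, norm_mul, Complex.norm_real, Real.norm_eq_abs,
      abs_div, abs_of_pos hπ, abs_inv, abs_of_pos hs]
    field_simp
  -- the parametric integrand
  set F : ℝ → ℝ × ℝ → ℂ := fun y p =>
    Complex.exp (Complex.I * (p.1 * x + p.2 * y)) * FT w p.1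
      * ((ψ (p.2 / |p.1|) : ℝ) : ℂ) * ((|p.1|⁻¹ : ℝ) : ℂ) with hF_def
  have hmeasM : ∀ y : ℝ, Measurable (F y) := by
    intro y
    apply Measurable.mul
    apply Measurable.mul
    apply Measurable.mul
    · exact (Complex.measurable_exp.comp (by fun_prop))
    · exact hFTcont.measurable.comp measurable_fst
    · exact Complex.measurable_ofReal.comp
        (hψc.measurable.comp (measurable_snd.div measurable_fst.abs))
    · exact Complex.measurable_ofReal.comp measurable_fst.abs.inv
  have hnorm : ∀ (y ξ η : ℝ), ‖F y (ξ, η)‖ = ‖FT w ξ‖ * ψ (η / |ξ|) * |ξ|⁻¹ := by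
    intro y ξ η
    have he : (Complex.I * ((ξ:ℂ) * x + (η:ℂ) * y)) = ((ξ * x + η * y : ℝ) : ℂ) * Complex.I := by
      push_cast; ring
    show ‖Complex.exp (Complex.I * ((ξ:ℂ) * x + (η:ℂ) * y)) * FT w ξ
      * ((ψ (η / |ξ|) : ℝ) : ℂ) * ((|ξ|⁻¹ : ℝ) : ℂ)‖ = _
    rw [norm_mul, norm_mul, norm_mul, he, Complex.norm_exp_ofReal_mul_I]
    rw [Complex.norm_real, Complex.norm_real, Real.norm_eq_abs, Real.norm_eq_abs,
      _root_.abs_of_nonneg (hψnonneg _), _root_.abs_of_nonneg (inv_nonneg.mpr (abs_nonneg ξ))]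
    ring
  have hne : ∀ᵐ ξ : ℝ, ξ ≠ (0:ℝ) := by
    refine ae_iff.mpr ?_
    have h0 : {a : ℝ | ¬ a ≠ 0} = {0} := by ext t; simp
    rw [h0]
    exact measure_singleton 0
  -- change of variables helpers, for c = |ξ| > 0
  have hcdiv : ∀ c : ℝ, 0 < c → (∫ η : ℝ, ψ (η / c)) = c * s := by
    intro c hc
    rw [Measure.integral_comp_div ψ c, hS, smul_eq_mul, abs_of_pos hc]
  have hcdiv1 : ∀ c : ℝ, 0 < c →
      (∫ η : ℝ, |η| * ψ (η / c)) = c * (c * ∫ t : ℝ, |t| * ψ t) := by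
    intro c hc
    have h1 : (fun η : ℝ => |η| * ψ (η / c)) = fun η => (fun t => c * (|t| * ψ t)) (η / c) := by
      funext η
      have : c * (|η / c| * ψ (η / c)) = |η| * ψ (η / c) := by
        rw [abs_div, abs_of_pos hc]
        field_simp
      simp only [this]
    rw [h1, Measure.integral_comp_div (fun t => c * (|t| * ψ t)) c, smul_eq_mul, abs_of_pos hc,
      integral_const_mul _ _]
  have hcdiv2 : ∀ c : ℝ, 0 < c → (∫ η : ℝ, η * ψ (η / c)) = 0 := by
    intro c hc
    have h1 : (fun η : ℝ => η * ψ (η / c)) = fun η => (fun t => c * (t * ψ t)) (η / c) := by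
      funext η
      have : c * (η / c * ψ (η / c)) = η * ψ (η / c) := by field_simp
      simp only [this]
    rw [h1, Measure.integral_comp_div (fun t => c * (t * ψ t)) c, smul_eq_mul,
      integral_const_mul _ _, hOdd]
    ring
  -- integrability of the double integrand
  have hInt : ∀ y : ℝ, Integrable (F y) (volume : Measure (ℝ × ℝ)) := by
    intro y
    rw [Measure.volume_eq_prod]
    refine (integrable_prod_iff (hmeasM y).aestronglyMeasurable).mpr ⟨?_, ?_⟩
    · filter_upwards [hne] with ξ hξ
      have hc : 0 < |ξ| := abs_pos.mpr hξ
      refine Integrable.mono' ((hψint.comp_div (ne_of_gt hc)).const_mul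
        (‖FT w ξ‖ * |ξ|⁻¹)) ?_ (ae_of_all _ fun η => ?_)
      · have hcont : Continuous fun η : ℝ => F y (ξ, η) := by
          show Continuous fun η : ℝ => Complex.exp (Complex.I * ((ξ:ℂ) * x + (η:ℂ) * y))
            * FT w ξ * ((ψ (η / |ξ|) : ℝ) : ℂ) * ((|ξ|⁻¹ : ℝ) : ℂ)
          exact (((Complex.continuous_exp.comp (by fun_prop)).mul continuous_const).mul
            (Complex.continuous_ofReal.comp (hψc.comp (continuous_id.div_const _)))).mul
            continuous_const
        exact hcont.aestronglyMeasurable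
      · rw [hnorm]
        exact le_of_eq (by ring)
    · refine (hFTint.norm.const_mul s).congr ?_
      filter_upwards [hne] with ξ hξ
      have hc : 0 < |ξ| := abs_pos.mpr hξ
      show s * ‖FT w ξ‖ = ∫ η : ℝ, ‖F y (ξ, η)‖
      have h1 : ∀ η : ℝ, ‖F y (ξ, η)‖ = (‖FT w ξ‖ * |ξ|⁻¹) * ψ (η / |ξ|) := fun η => by
        rw [hnorm]; ring
      rw [funext h1, integral_const_mul _ _, hcdiv _ hc]
      field_simp
  -- inner integral at y = 0
  have hinner0 : ∀ ξ : ℝ, ξ ≠ 0 → (∫ η : ℝ, F 0 (ξ, η))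
      = ((s : ℝ) : ℂ) * (Complex.exp (Complex.I * ξ * x) * FT w ξ) := by
    intro ξ hξ
    have hc : 0 < |ξ| := abs_pos.mpr hξ
    have h1 : ∀ η : ℝ, F 0 (ξ, η) = (Complex.exp (Complex.I * ξ * x) * FT w ξ
        * ((|ξ|⁻¹ : ℝ) : ℂ)) * ((ψ (η / |ξ|) : ℝ) : ℂ) := by
      intro η
      show Complex.exp (Complex.I * ((ξ:ℂ) * x + (η:ℂ) * ((0:ℝ):ℂ))) * FT w ξ
        * ((ψ (η / |ξ|) : ℝ) : ℂ) * ((|ξ|⁻¹ : ℝ) : ℂ) = _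
      rw [Complex.ofReal_zero, mul_zero, add_zero, ← mul_assoc]
      ring
    rw [funext h1, integral_const_mul _ _]
    have h2 : (∫ a : ℝ, ((ψ (a / |ξ|) : ℝ) : ℂ)) = ((|ξ| * s : ℝ) : ℂ) := by
      rw [← hcdiv _ hc]; exact integral_ofReal
    rw [h2]
    have hne' : ((|ξ| : ℝ) : ℂ) ≠ 0 := Complex.ofReal_ne_zero.mpr (ne_of_gt hc)
    push_cast
    push_cast at hne'
    field_simp
  -- outer integral: Fourier inversion
  have houter : (∫ ξ : ℝ, Complex.exp (Complex.I * ξ * x) * FT w ξ)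
      = ((s⁻¹ : ℝ) : ℂ) * (((2 * Real.pi : ℝ) : ℂ) * w x) := by
    set g : ℝ → ℂ := fun v => Complex.exp (((2 * Real.pi * v * x : ℝ) : ℂ) * Complex.I) * W v
      with hg
    have h1 : ∀ ξ : ℝ, Complex.exp (Complex.I * ξ * x) * FT w ξ
        = ((s⁻¹ : ℝ) : ℂ) * g (ξ / (2 * Real.pi)) := by
      intro ξ
      rw [hFTW ξ, hg]
      have h2 : 2 * Real.pi * (ξ / (2 * Real.pi)) * x = ξ * x := by field_simp
      show Complex.exp (Complex.I * ξ * x) * (((s⁻¹ : ℝ) : ℂ) * W (ξ / (2 * Real.pi)))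
        = ((s⁻¹ : ℝ) : ℂ) * (Complex.exp (((2 * Real.pi * (ξ / (2 * Real.pi)) * x : ℝ) : ℂ)
            * Complex.I) * W (ξ / (2 * Real.pi)))
      rw [h2]
      have h3 : Complex.I * (ξ:ℂ) * (x:ℂ) = ((ξ * x : ℝ) : ℂ) * Complex.I := by
        push_cast; ring
      rw [h3]; ring
    rw [funext h1, integral_const_mul _ _, Measure.integral_comp_div g (2 * Real.pi)]
    have h4 : ∫ v, g v = 𝓕 (⇑W) (-x) := by
      rw [Real.fourier_real_eq_integral_exp_smul]
      refine integral_congr_ae (Eventually.of_forall fun v => ?_)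
      show g v = Complex.exp (((-2 * Real.pi * v * (-x) : ℝ) : ℂ) * Complex.I) • W v
      rw [hg]
      have h5 : (-2) * Real.pi * v * (-x) = 2 * Real.pi * v * x := by ring
      rw [smul_eq_mul]
      show Complex.exp (((2 * Real.pi * v * x : ℝ) : ℂ) * Complex.I) * W v = _
      rw [h5]
    have h6 : (⇑W : ℝ → ℂ) = 𝓕 (⇑w) := funext hWf
    have h7 : 𝓕 (⇑W) (-x) = w x := by
      rw [h6, ← Real.fourierInv_eq_fourier_neg]
      exact w.integrable.fourierInv_fourier_eq (by rw [← h6]; exact W.integrable)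
        w.continuous.continuousAt
    rw [h4, h7, abs_of_pos hπ]
    rw [real_smul]
  -- part (i): value at y = 0
  have hI0 : Integrable (F 0) ((volume : Measure ℝ).prod volume) := by
    rw [← Measure.volume_eq_prod]; exact hInt 0
  have hpart1 : (((1 / (2 * Real.pi) : ℝ) : ℂ) * ∫ p : ℝ × ℝ, F 0 p) = w x := by
    rw [Measure.volume_eq_prod, MeasureTheory.integral_prod _ hI0]
    have hcong : (fun ξ : ℝ => ∫ η : ℝ, F 0 (ξ, η))
        =ᵐ[volume] fun ξ : ℝ => ((s : ℝ) : ℂ) * (Complex.exp (Complex.I * ξ * x) * FT w ξ) := by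
      filter_upwards [hne] with ξ hξ
      exact hinner0 ξ hξ
    rw [integral_congr_ae hcong, integral_const_mul _ _, houter]
    have hsC : ((s : ℝ) : ℂ) ≠ 0 := Complex.ofReal_ne_zero.mpr hs0
    have hπC : (((2 : ℝ) * Real.pi : ℝ) : ℂ) ≠ 0 := Complex.ofReal_ne_zero.mpr hπ'
    push_cast
    push_cast at hsC hπC
    field_simp
  -- derivative part
  set F' : ℝ → ℝ × ℝ → ℂ := fun y p => (Complex.I * p.2) * F y p with hF'_def
  have hF'norm : ∀ (y ξ η : ℝ), ‖F' y (ξ, η)‖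
      = |η| * (‖FT w ξ‖ * ψ (η / |ξ|) * |ξ|⁻¹) := by
    intro y ξ η
    show ‖(Complex.I * (η:ℂ)) * F y (ξ, η)‖ = _
    rw [norm_mul, norm_mul, Complex.norm_I, one_mul, Complex.norm_real, Real.norm_eq_abs,
      hnorm]
  have hderiv : ∀ (ξ η : ℝ) (y : ℝ), HasDerivAt (fun y' => F y' (ξ, η)) (F' y (ξ, η)) y := by
    intro ξ η y
    have h0 : HasDerivAt (fun z : ℂ => (ξ:ℂ) * x + (η:ℂ) * z) ((η:ℂ)) (y:ℂ) := by
      simpa using ((hasDerivAt_id ((y:ℝ):ℂ)).const_mul ((η:ℂ))).const_add ((ξ:ℂ) * x)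
    have h1 := h0.const_mul Complex.I
    have h2 := h1.cexp
    have h3 := ((h2.mul_const (FT w ξ)).mul_const ((ψ (η / |ξ|) : ℝ) : ℂ)).mul_const
      ((|ξ|⁻¹ : ℝ) : ℂ)
    have h4 := h3.comp_ofReal
    convert h4 using 1
    show (Complex.I * (η:ℂ)) * (Complex.exp (Complex.I * ((ξ:ℂ) * x + (η:ℂ) * y)) * FT w ξ
      * ((ψ (η / |ξ|) : ℝ) : ℂ) * ((|ξ|⁻¹ : ℝ) : ℂ)) = _
    ring
  set bound : ℝ × ℝ → ℝ := fun p => |p.2| * (‖FT w p.1‖ * ψ (p.2 / |p.1|) * |p.1|⁻¹)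
    with hbound_def
  have hboundmeas : Measurable bound := by
    apply Measurable.mul
    · exact measurable_snd.abs
    apply Measurable.mul
    apply Measurable.mul
    · exact (hFTcont.measurable.comp measurable_fst).norm
    · exact hψc.measurable.comp (measurable_snd.div measurable_fst.abs)
    · exact measurable_fst.abs.inv
  have hboundint : Integrable bound (volume : Measure (ℝ × ℝ)) := by
    rw [Measure.volume_eq_prod]
    refine (integrable_prod_iff hboundmeas.aestronglyMeasurable).mpr ⟨?_, ?_⟩
    · filter_upwards [hne] with ξ hξ
      have hc : 0 < |ξ| := abs_pos.mpr hξ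
      have hbint : Integrable (fun η : ℝ => |η| * ψ (η / |ξ|)) := by
        refine ((hψ1int.const_mul |ξ|).comp_div (ne_of_gt hc)).congr
          (Eventually.of_forall fun η => ?_)
        show |ξ| * (_root_.abs (η / |ξ|) * ψ (η / |ξ|)) = |η| * ψ (η / |ξ|)
        rw [_root_.abs_div, _root_.abs_abs]
        field_simp
      refine (hbint.const_mul (‖FT w ξ‖ * |ξ|⁻¹)).congr (Eventually.of_forall fun η => ?_)
      show (‖FT w ξ‖ * |ξ|⁻¹) * (|η| * ψ (η / |ξ|))
        = |η| * (‖FT w ξ‖ * ψ (η / |ξ|) * |ξ|⁻¹)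
      ring
    · refine ((hFT1int.const_mul (∫ t : ℝ, |t| * ψ t)).congr ?_)
      filter_upwards [hne] with ξ hξ
      have hc : 0 < |ξ| := abs_pos.mpr hξ
      have habs : ∀ η : ℝ, ‖bound (ξ, η)‖ = (‖FT w ξ‖ * |ξ|⁻¹) * (|η| * ψ (η / |ξ|)) := by
        intro η
        rw [Real.norm_eq_abs, _root_.abs_of_nonneg (mul_nonneg (abs_nonneg η)
          (mul_nonneg (mul_nonneg (norm_nonneg (FT w ξ)) (hψnonneg _))
            (inv_nonneg.mpr (abs_nonneg ξ))))]
        show |η| * (‖FT w ξ‖ * ψ (η / |ξ|) * |ξ|⁻¹) = _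
        ring
      show (∫ t : ℝ, |t| * ψ t) * (|ξ| * ‖FT w ξ‖) = ∫ η : ℝ, ‖bound (ξ, η)‖
      rw [funext habs, integral_const_mul _ _, hcdiv1 _ hc]
      field_simp
  have hF'meas : AEStronglyMeasurable (F' 0) (volume : Measure (ℝ × ℝ)) := by
    refine Measurable.aestronglyMeasurable ?_
    exact (measurable_const.mul (Complex.measurable_ofReal.comp measurable_snd)).mul (hmeasM 0)
  have key := hasDerivAt_integral_of_dominated_loc_of_deriv_le
    (μ := (volume : Measure (ℝ × ℝ))) (F := F) (F' := F') (x₀ := (0:ℝ)) (bound := bound)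
    (Metric.ball_mem_nhds (0:ℝ) one_pos)
    (Eventually.of_forall fun y => (hmeasM y).aestronglyMeasurable)
    (hInt 0) hF'meas
    (ae_of_all _ fun p y _ => by
      obtain ⟨ξ, η⟩ := p
      rw [hF'norm])
    hboundint
    (ae_of_all _ fun p y _ => by
      obtain ⟨ξ, η⟩ := p
      exact hderiv ξ η y)
  -- the derivative integral vanishes
  have hzero : (∫ p : ℝ × ℝ, F' 0 p) = 0 := by
    have hI' : Integrable (F' 0) ((volume : Measure ℝ).prod volume) := by
      rw [← Measure.volume_eq_prod]; exact key.1
    rw [Measure.volume_eq_prod, MeasureTheory.integral_prod _ hI']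
    have hcong : (fun ξ : ℝ => ∫ η : ℝ, F' 0 (ξ, η)) =ᵐ[volume] fun _ => (0:ℂ) := by
      filter_upwards [hne] with ξ hξ
      have hc : 0 < |ξ| := abs_pos.mpr hξ
      have h1 : ∀ η : ℝ, F' 0 (ξ, η) = (Complex.I * Complex.exp (Complex.I * ξ * x) * FT w ξ
          * ((|ξ|⁻¹ : ℝ) : ℂ)) * ((η * ψ (η / |ξ|) : ℝ) : ℂ) := by
        intro η
        show (Complex.I * (η:ℂ)) * (Complex.exp (Complex.I * ((ξ:ℂ) * x + (η:ℂ) * ((0:ℝ):ℂ)))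
          * FT w ξ * ((ψ (η / |ξ|) : ℝ) : ℂ) * ((|ξ|⁻¹ : ℝ) : ℂ)) = _
        rw [Complex.ofReal_zero, mul_zero, add_zero]
        push_cast
        ring
      show (∫ η : ℝ, F' 0 (ξ, η)) = 0
      rw [funext h1, integral_const_mul _ _]
      have h2 : (∫ a : ℝ, ((a * ψ (a / |ξ|) : ℝ) : ℂ)) = (((0:ℝ)) : ℂ) := by
        rw [← hcdiv2 _ hc]; exact integral_ofReal
      rw [h2, Complex.ofReal_zero, mul_zero]
    rw [integral_congr_ae hcong]
    exact integral_zero _ _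
  have hpart2 : HasDerivAt (fun y : ℝ => ((1 / (2 * Real.pi) : ℝ) : ℂ) * ∫ p : ℝ × ℝ, F y p)
      0 0 := by
    have h := (key.2).const_mul (((1 / (2 * Real.pi) : ℝ)) : ℂ)
    rw [hzero, mul_zero] at h
    exact h
  exact ⟨hpart1, hpart2⟩

/-- The extension operator `E` from the line `M = {y₁ = y₂ = 0}` to `N = {y₁ = 0}`
in ℝ³ reproduces the data on `M`: `E(w)(x,0) = w(x)` and `∂_y E(w)(x,0) = 0`;
consequently `u₀ = E(w₀) + y·E(w₀₁)`, `u₁ = E(w₁₀)` restrict to the prescribed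
initial data on `M` and satisfy the compatibility condition `∂_y u₀(x,0) = w₀₁(x)`. -/
theorem extension_operator_reproduces_data
    (ψ : ℝ → ℝ) (hψs : ContDiff ℝ (⊤ : ℕ∞) ψ) (hψsupp : Function.support ψ ⊆ Set.Icc (-1) 1)
    (hψeven : ∀ θ, ψ (-θ) = ψ θ) (hψnonneg : ∀ θ, 0 ≤ ψ θ)
    (hψnorm : (1 / Real.sqrt (2 * Real.pi)) * ∫ θ in Set.Icc (-1 : ℝ) 1, ψ θ = 1)
    (FT : SchwartzMap ℝ ℂ → ℝ → ℂ)
    (hFT : ∀ (w : SchwartzMap ℝ ℂ) (ξ : ℝ),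
      FT w ξ = ((1 / Real.sqrt (2 * Real.pi) : ℝ) : ℂ)
        * ∫ x : ℝ, Complex.exp (-(Complex.I * ξ * x)) * w x)
    (E : SchwartzMap ℝ ℂ → ℝ → ℝ → ℂ)
    (hE : ∀ (w : SchwartzMap ℝ ℂ) (x y : ℝ),
      E w x y = ((1 / (2 * Real.pi) : ℝ) : ℂ) * ∫ p : ℝ × ℝ,
        Complex.exp (Complex.I * (p.1 * x + p.2 * y)) * FT w p.1
          * ((ψ (p.2 / |p.1|) : ℝ) : ℂ) * ((|p.1|⁻¹ : ℝ) : ℂ))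
    (w w₀ w₁₀ w₀₁ : SchwartzMap ℝ ℂ) :
    (∀ x : ℝ, E w x 0 = w x)
    ∧ (∀ x : ℝ, deriv (fun y => E w x y) 0 = 0)
    ∧ (∀ x : ℝ, E w₀ x 0 + (0 : ℝ) * E w₀₁ x 0 = w₀ x)
    ∧ (∀ x : ℝ, E w₁₀ x 0 = w₁₀ x)
    ∧ (∀ x : ℝ, deriv (fun y : ℝ => E w₀ x y + (y : ℂ) * E w₀₁ x y) 0 = w₀₁ x) := by
  have key := fun (w' : SchwartzMap ℝ ℂ) (x : ℝ) =>
    ext_key ψ hψs hψsupp hψeven hψnonneg hψnorm FT hFT w' x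
  have hval : ∀ (w' : SchwartzMap ℝ ℂ) (x : ℝ), E w' x 0 = w' x := by
    intro w' x
    rw [hE]
    exact (key w' x).1
  have hderiv0 : ∀ (w' : SchwartzMap ℝ ℂ) (x : ℝ), HasDerivAt (fun y => E w' x y) 0 0 := by
    intro w' x
    have h := (key w' x).2
    have hfun : (fun y : ℝ => E w' x y) = fun y : ℝ =>
        ((1 / (2 * Real.pi) : ℝ) : ℂ) * ∫ p : ℝ × ℝ,
          Complex.exp (Complex.I * (p.1 * x + p.2 * y)) * FT w' p.1
            * ((ψ (p.2 / |p.1|) : ℝ) : ℂ) * ((|p.1|⁻¹ : ℝ) : ℂ) :=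
      funext fun y => hE w' x y
    rw [hfun]
    exact h
  refine ⟨fun x => hval w x, fun x => (hderiv0 w x).deriv, fun x => ?_,
    fun x => hval w₁₀ x, fun x => ?_⟩
  · rw [hval w₀ x]
    simp
  · have h1 := hderiv0 w₀ x
    have h2 : HasDerivAt (fun y : ℝ => ((y : ℝ) : ℂ) * E w₀₁ x y) (E w₀₁ x 0) 0 := by
      have ha : HasDerivAt (fun y : ℝ => ((y : ℝ) : ℂ)) 1 0 := by
        simpa using (hasDerivAt_id (0:ℝ)).ofReal_comp
      have hb := ha.fun_mul (hderiv0 w₀₁ x)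
      simpa using hb
    have h3 := h1.fun_add h2
    rw [zero_add] at h3
    rw [h3.deriv]
    exact hval w₀₁ x
end

section
/- Let ε ∈ (0, 1] and t ∈ ℝ with t ≠ 0. Set a = 1 + (1 − ε²)·t² and let Q₂ be the symmetric 2×2 real matrix Q₂ = [[−1, t], [t, a/ε²]]. Then the symmetric matrix Q₂² + Q₂ is positive definite: for every nonzero vector v ∈ ℝ², ⟨v, (Q₂² + Q₂)·v⟩ > 0. -/
/-! For `Q = [[-1, t], [t, b]]` the quadratic form of `Q² + Q` is the sum of squares
`(t x + b y)² + (t² + b) y²`. With `b = a / ε²` the coefficient `t² + b` collapses to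
`(1 + t²) / ε² > 0`, and vectors with `y = 0` are caught by `t ≠ 0`. -/

open Matrix

theorem sq_add_self_eq (t b : ℝ) :
    !![-1, t; t, b] ^ 2 + !![-1, t; t, b] = !![t ^ 2, t * b; t * b, t ^ 2 + b ^ 2 + b] := by
  rw [sq, mul_fin_two]
  ext i j
  fin_cases i <;> fin_cases j <;> simp <;> ring

theorem dotProduct_mulVec_eq_sq_add_mul_sq (t b : ℝ) (v : Fin 2 → ℝ) :
    v ⬝ᵥ (!![t ^ 2, t * b; t * b, t ^ 2 + b ^ 2 + b] *ᵥ v) =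
      (t * v 0 + b * v 1) ^ 2 + (t ^ 2 + b) * v 1 ^ 2 := by
  rw [vec2_dotProduct, mulVec_fin_two]
  simp only [of_apply, cons_val', cons_val_zero, cons_val_one, cons_val_fin_one]
  ring

theorem sq_add_mul_sq_pos {t b x y : ℝ} (ht : t ≠ 0) (hb : 0 < t ^ 2 + b)
    (hxy : x ≠ 0 ∨ y ≠ 0) : 0 < (t * x + b * y) ^ 2 + (t ^ 2 + b) * y ^ 2 := by
  rcases eq_or_ne y 0 with rfl | hy
  · have hx : x ≠ 0 := hxy.resolve_right (not_not.mpr rfl)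
    simpa using sq_pos_of_ne_zero (mul_ne_zero ht hx)
  · positivity

theorem dotProduct_sq_add_self_mulVec_pos {t b : ℝ} (ht : t ≠ 0) (hb : 0 < t ^ 2 + b)
    {v : Fin 2 → ℝ} (hv : v ≠ 0) :
    0 < v ⬝ᵥ ((!![-1, t; t, b] ^ 2 + !![-1, t; t, b]) *ᵥ v) := by
  have hv' : v 0 ≠ 0 ∨ v 1 ≠ 0 := by
    contrapose! hv
    ext i
    fin_cases i <;> simp [hv.1, hv.2]
  rw [sq_add_self_eq, dotProduct_mulVec_eq_sq_add_mul_sq]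
  exact sq_add_mul_sq_pos ht hb hv'

theorem sq_add_div_sq_eq (t : ℝ) {ε : ℝ} (hε : ε ≠ 0) :
    t ^ 2 + (1 + (1 - ε ^ 2) * t ^ 2) / ε ^ 2 = (1 + t ^ 2) / ε ^ 2 := by
  field_simp
  ring

/-- Positive definiteness of `Q₂² + Q₂` for the matrix `Q₂ = [[-1, t],[t, a/ε²]]`
with `a = 1 + (1 - ε²)·t²`, used to show that the rotated hyperboloid families
in the Courant-type uniqueness theorem are noncharacteristic. -/
theorem Q2_sq_add_Q2_posDef (ε t : ℝ) (hε : ε ∈ Set.Ioc (0 : ℝ) 1) (ht : t ≠ 0)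
    (a : ℝ) (ha : a = 1 + (1 - ε ^ 2) * t ^ 2)
    (Q₂ : Matrix (Fin 2) (Fin 2) ℝ) (hQ : Q₂ = !![-1, t; t, a / ε ^ 2]) :
    ∀ v : Fin 2 → ℝ, v ≠ 0 → 0 < dotProduct v ((Q₂ ^ 2 + Q₂).mulVec v) := by
  intro v hv
  subst hQ ha
  refine dotProduct_sq_add_self_mulVec_pos ht ?_ hv
  rw [sq_add_div_sq_eq t hε.1.ne']
  exact div_pos (by positivity) (pow_pos hε.1 2)
end
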